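/- arXiv:1402.4956 — 4 statements merged into one kernel-verified Lean document; each statement's English description precedes it below -/
import Mathlib

section
/- (Proposition 1, σ-derivative, corrected form.) For every y ∈ ℝ the map σ ↦ p^{θ,σ,λ}(Δ,x,y) is differentiable on (0,∞), and for (law of X)-almost every y one has ∂_σ p^{θ,σ,λ}(Δ,x,y) / p^{θ,σ,λ}(Δ,x,y) = (1/(σΔ)) · E[W² | X = y] − 1/σ, where E[W² | X = y] is the conditional expectation of W² given X, evaluated at y via a regular conditional distribution. (The published statement writes (1/Δ)E[W²|X=y] − 1/σ; the factor 1/(σΔ) given here is the one consistent with a direct computation and with the rest of the paper.) -/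
/-!
Given `P = m`, the observation `X` is Gaussian with mean `c_m = x + (θ - λ)Δ + m` and
variance `σ²Δ`, and `W = (X - c_m)/σ`. Hence `(W, X)` has the joint law
`∑ₘ w_m(y) dy ⊗ δ_{(y - c_m)/σ}`, so that `E[W² | X = y] = ∑ₘ ((y - c_m)/σ)² w_m(y) / p(y)`.
On the other hand `∂_σ w_m = w_m (((y - c_m)/σ)²/Δ - 1)/σ`, and on `σ ≥ δ` these derivatives
are bounded by the Poisson weights times `3 (2πΔ)^{-1/2} / δ²`. So `p` may be differentiated
termwise, giving `∂_σ p = (σΔ)⁻¹ ∑ₘ ((y - c_m)/σ)² w_m - p/σ`.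
-/

open MeasureTheory ProbabilityTheory Real Filter

/-- The weight `w_m^{ϑ,ς,ϰ}(Δ,x,y)`: Poisson weight times Gaussian kernel. -/
noncomputable def wgt (ϑ ς ϰ Δ x : ℝ) (m : ℕ) (y : ℝ) : ℝ :=
  Real.exp (-(ϰ * Δ)) * ((ϰ * Δ) ^ m / (Nat.factorial m : ℝ)) *
    (Real.sqrt (2 * Real.pi * ς ^ 2 * Δ))⁻¹ *
    Real.exp (-(y - x - (m : ℝ) - (ϑ - ϰ) * Δ) ^ 2 / (2 * ς ^ 2 * Δ))

/-- The transition density `p^{ϑ,ς,ϰ}(Δ,x,y)`. -/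
noncomputable def pdens (ϑ ς ϰ Δ x y : ℝ) : ℝ := ∑' m : ℕ, wgt ϑ ς ϰ Δ x m y

open scoped NNReal ENNReal Topology

section GaussianScaleFamily

lemma gaussianPDFReal_le_inv_sqrt (μ : ℝ) (v : ℝ≥0) (x : ℝ) :
    gaussianPDFReal μ v x ≤ (√(2 * π * v))⁻¹ := by
  refine mul_le_of_le_one_right (by positivity) (exp_le_one_iff.2 ?_)
  exact div_nonpos_of_nonpos_of_nonneg (neg_nonpos.2 (sq_nonneg _)) (by positivity)

lemma sq_mul_gaussianPDFReal_le (μ : ℝ) (v : ℝ≥0) (x : ℝ) :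
    (x - μ) ^ 2 * gaussianPDFReal μ v x ≤ 2 * v * (√(2 * π * v))⁻¹ := by
  rcases eq_or_ne v 0 with rfl | hv
  · simp
  set t := (x - μ) ^ 2 / (2 * v)
  have ht : (x - μ) ^ 2 = 2 * v * t := by
    have : (0 : ℝ) < v := by positivity
    simp only [t]; field_simp
  have hexp : t * exp (-t) ≤ 1 :=
    (mul_exp_neg_le_exp_neg_one t).trans (exp_le_one_iff.2 (by norm_num))
  calc (x - μ) ^ 2 * gaussianPDFReal μ v x
      = 2 * v * (√(2 * π * v))⁻¹ * (t * exp (-t)) := by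
        rw [gaussianPDFReal, neg_div]
        change (x - μ) ^ 2 * (_ * exp (-t)) = _
        rw [ht]; ring
    _ ≤ 2 * v * (√(2 * π * v))⁻¹ := mul_le_of_le_one_right (by positivity) hexp

lemma hasDerivAt_gaussianPDFReal (μ : ℝ) (v : ℝ≥0) (x : ℝ) :
    HasDerivAt (gaussianPDFReal μ v) (-(x - μ) / v * gaussianPDFReal μ v x) x := by
  have h := ((((hasDerivAt_id' x).sub_const μ).fun_pow 2).fun_neg.div_const
    (2 * (v : ℝ))).exp.const_mul (√(2 * π * v))⁻¹
  refine h.congr_deriv ?_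
  simp only [gaussianPDFReal]
  push_cast
  ring

lemma gaussianPDFReal_sq_mul (μ : ℝ) (v : ℝ≥0) (x : ℝ) {s : ℝ} (hs : 0 < s) :
    gaussianPDFReal μ ((s ^ 2).toNNReal * v) x = s⁻¹ * gaussianPDFReal 0 v ((x - μ) / s) := by
  have hsqrt : √(2 * π * (s ^ 2 * v)) = s * √(2 * π * v) := by
    rw [show 2 * π * (s ^ 2 * v) = s ^ 2 * (2 * π * v) by ring, sqrt_mul (sq_nonneg s),
      sqrt_sq hs.le]
  simp only [gaussianPDFReal, NNReal.coe_mul, Real.coe_toNNReal _ (sq_nonneg s), hsqrt, mul_inv,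
    sub_zero, div_pow]
  field_simp

lemma hasDerivAt_gaussianPDFReal_sq_mul (μ : ℝ) (v : ℝ≥0) (x : ℝ) {s : ℝ} (hs : 0 < s) :
    HasDerivAt (fun t => gaussianPDFReal μ ((t ^ 2).toNNReal * v) x)
      (gaussianPDFReal μ ((s ^ 2).toNNReal * v) x * (((x - μ) / s) ^ 2 / v - 1) / s) s := by
  have hquot : HasDerivAt (fun t => (x - μ) / t) (-((x - μ) / s) / s) s := by
    simp only [div_eq_mul_inv]
    refine ((hasDerivAt_inv hs.ne').const_mul (x - μ)).congr_deriv ?_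
    field_simp
  have h := (hasDerivAt_inv hs.ne').mul ((hasDerivAt_gaussianPDFReal 0 v _).comp s hquot)
  have heq : (fun t => gaussianPDFReal μ ((t ^ 2).toNNReal * v) x) =ᶠ[𝓝 s]
      fun t => t⁻¹ * gaussianPDFReal 0 v ((x - μ) / t) := by
    filter_upwards [Ioi_mem_nhds hs] with t ht using gaussianPDFReal_sq_mul μ v x ht
  refine (h.congr_of_eventuallyEq heq).congr_deriv ?_
  rw [gaussianPDFReal_sq_mul μ v x hs, Function.comp_apply, sub_zero]
  field_simp
  ring

lemma abs_gaussianPDFReal_sq_mul_deriv_le (μ : ℝ) (v : ℝ≥0) (x : ℝ) {δ s : ℝ} (hδ : 0 < δ)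
    (hδs : δ ≤ s) :
    |gaussianPDFReal μ ((s ^ 2).toNNReal * v) x * (((x - μ) / s) ^ 2 / v - 1) / s|
      ≤ 3 * (√(2 * π * v))⁻¹ / δ ^ 2 := by
  have hs : 0 < s := hδ.trans_le hδs
  set u := (x - μ) / s
  set φ := gaussianPDFReal 0 v u
  have hφ0 : 0 ≤ φ := gaussianPDFReal_nonneg _ _ _
  have hφ : φ ≤ (√(2 * π * v))⁻¹ := gaussianPDFReal_le_inv_sqrt _ _ _
  have hu0 : 0 ≤ u ^ 2 / v := by positivity
  have hu : u ^ 2 / v * φ ≤ 2 * (√(2 * π * v))⁻¹ := by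
    rcases eq_or_ne (v : ℝ) 0 with hv | hv
    · simp only [hv, div_zero, zero_mul]; positivity
    · have := sq_mul_gaussianPDFReal_le 0 v u
      rw [sub_zero] at this
      rw [div_mul_eq_mul_div, div_le_iff₀ (by positivity)]
      linarith
  have hscaled : |φ * (u ^ 2 / v - 1)| ≤ 3 * (√(2 * π * v))⁻¹ := by
    rw [abs_le]; constructor <;> nlinarith
  calc |gaussianPDFReal μ ((s ^ 2).toNNReal * v) x * (u ^ 2 / v - 1) / s|
      = |φ * (u ^ 2 / v - 1)| / s ^ 2 := by
        rw [gaussianPDFReal_sq_mul μ v x hs, ← abs_of_pos (pow_pos hs 2), ← abs_div]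
        congr 1
        field_simp
        exact mul_comm _ _
    _ ≤ 3 * (√(2 * π * v))⁻¹ / s ^ 2 := by gcongr
    _ ≤ 3 * (√(2 * π * v))⁻¹ / δ ^ 2 := by gcongr

end GaussianScaleFamily

section GaussianScaleMixture

variable {ι : Type*} {q : ι → ℝ} (c : ι → ℝ) (v : ℝ≥0)

lemma continuous_gaussianPDFReal (μ : ℝ) : Continuous (gaussianPDFReal μ v) := by
  rw [gaussianPDFReal_def]
  fun_prop

lemma norm_mul_gaussianPDFReal_le (i : ι) (y : ℝ) :
    ‖q i * gaussianPDFReal (c i) v y‖ ≤ ‖q i‖ * (√(2 * π * v))⁻¹ := by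
  rw [norm_mul, Real.norm_of_nonneg (gaussianPDFReal_nonneg _ _ _)]
  exact mul_le_mul_of_nonneg_left (gaussianPDFReal_le_inv_sqrt _ _ _) (norm_nonneg _)

lemma norm_sq_div_mul_gaussianPDFReal_le (s : ℝ) (i : ι) (y : ℝ) :
    ‖((y - c i) / s) ^ 2 * (q i * gaussianPDFReal (c i) v y)‖
      ≤ ‖q i‖ * (2 * v * (√(2 * π * v))⁻¹ / s ^ 2) := by
  have := gaussianPDFReal_nonneg (c i) v y
  rw [show ((y - c i) / s) ^ 2 * (q i * gaussianPDFReal (c i) v y)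
      = q i * ((y - c i) ^ 2 * gaussianPDFReal (c i) v y / s ^ 2) by ring,
    norm_mul, Real.norm_of_nonneg (r := (y - c i) ^ 2 * _ / s ^ 2) (by positivity)]
  gcongr _ * (?_ / _)
  exact sq_mul_gaussianPDFReal_le _ _ _

lemma summable_mul_gaussianPDFReal (hq : Summable q) (y : ℝ) :
    Summable fun i => q i * gaussianPDFReal (c i) v y :=
  (hq.norm.mul_right _).of_norm_bounded fun i => norm_mul_gaussianPDFReal_le c v i y

lemma summable_sq_div_mul_gaussianPDFReal (hq : Summable q) (s y : ℝ) :
    Summable fun i => ((y - c i) / s) ^ 2 * (q i * gaussianPDFReal (c i) v y) :=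
  (hq.norm.mul_right _).of_norm_bounded fun i => norm_sq_div_mul_gaussianPDFReal_le c v s i y

lemma continuous_tsum_mul_gaussianPDFReal (hq : Summable q) :
    Continuous fun y => ∑' i, q i * gaussianPDFReal (c i) v y :=
  continuous_tsum (fun _ => continuous_const.mul (continuous_gaussianPDFReal v _))
    (hq.norm.mul_right _) (norm_mul_gaussianPDFReal_le c v)

lemma continuous_tsum_sq_div_mul_gaussianPDFReal (hq : Summable q) (s : ℝ) :
    Continuous fun y => ∑' i, ((y - c i) / s) ^ 2 * (q i * gaussianPDFReal (c i) v y) :=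
  continuous_tsum
    (fun i => by have := continuous_gaussianPDFReal v (c i); fun_prop)
    (hq.norm.mul_right _) (norm_sq_div_mul_gaussianPDFReal_le c v s)

lemma hasDerivAt_tsum_mul_gaussianPDFReal_sq_mul (hq : Summable q) (y : ℝ) {s : ℝ}
    (hs : 0 < s) :
    HasDerivAt (fun t => ∑' i, q i * gaussianPDFReal (c i) ((t ^ 2).toNNReal * v) y)
      (∑' i, q i * (gaussianPDFReal (c i) ((s ^ 2).toNNReal * v) y *
        (((y - c i) / s) ^ 2 / v - 1) / s)) s := by
  have hs2 : 0 < s / 2 := half_pos hs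
  have hmem : s ∈ Set.Ioi (s / 2) := half_lt_self hs
  refine hasDerivAt_tsum_of_isPreconnected
    (hq.norm.mul_right (3 * (√(2 * π * v))⁻¹ / (s / 2) ^ 2)) isOpen_Ioi isPreconnected_Ioi
    (fun i t ht => (hasDerivAt_gaussianPDFReal_sq_mul _ v y (hs2.trans ht)).const_mul (q i))
    (fun i t ht => ?_) hmem (summable_mul_gaussianPDFReal c _ hq y) hmem
  rw [norm_mul, Real.norm_eq_abs]
  exact mul_le_mul_of_nonneg_left
    (abs_gaussianPDFReal_sq_mul_deriv_le _ v y hs2 (le_of_lt ht)) (abs_nonneg _)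

end GaussianScaleMixture

section

variable {Ω : Type*} [MeasurableSpace Ω] {μ : Measure Ω}

lemma integrable_sq_of_map_eq_gaussianReal {W : Ω → ℝ} (hWm : AEMeasurable W μ) {m : ℝ}
    {v : ℝ≥0} (hW : μ.map W = gaussianReal m v) : Integrable (fun ω => W ω ^ 2) μ := by
  have h : Integrable (fun w : ℝ => w ^ 2) (μ.map W) :=
    hW ▸ (memLp_id_gaussianReal' 2 (by norm_num)).integrable_sq
  exact (integrable_map_measure h.aestronglyMeasurable hWm).1 h

lemma lintegral_comp_const_add_mul_gaussianReal {v : ℝ≥0} (hv : v ≠ 0) (a : ℝ) {σ : ℝ}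
    (hσ : σ ≠ 0) {F : ℝ → ℝ → ℝ≥0∞} (hF : Measurable (Function.uncurry F)) :
    ∫⁻ w, F w (a + σ * w) ∂gaussianReal 0 v =
      ∫⁻ y, gaussianPDF a ((σ ^ 2).toNNReal * v) y * F ((y - a) / σ) y := by
  have hFm : Measurable fun y => F ((y - a) / σ) y :=
    hF.comp (((measurable_id.sub_const _).div_const _).prodMk measurable_id)
  have hmap : (gaussianReal 0 v).map (fun w => a + σ * w) =
      gaussianReal a ((σ ^ 2).toNNReal * v) := by
    rw [show (fun w => a + σ * w) = (a + ·) ∘ (σ * ·) from rfl,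
      ← Measure.map_map (by fun_prop) (by fun_prop), gaussianReal_map_const_mul,
      gaussianReal_map_const_add, Real.toNNReal_of_nonneg (sq_nonneg σ), mul_zero, zero_add]
  have hvar : (σ ^ 2).toNNReal * v ≠ 0 := mul_ne_zero (by simpa using hσ) hv
  calc ∫⁻ w, F w (a + σ * w) ∂gaussianReal 0 v
      = ∫⁻ w, F ((a + σ * w - a) / σ) (a + σ * w) ∂gaussianReal 0 v := by
        congr with w
        rw [add_sub_cancel_left, mul_div_cancel_left₀ _ hσ]
    _ = ∫⁻ y, F ((y - a) / σ) y ∂(gaussianReal 0 v).map (fun w => a + σ * w) :=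
        (lintegral_map hFm (by fun_prop)).symm
    _ = _ := by
        rw [hmap, gaussianReal_of_var_ne_zero _ hvar,
          lintegral_withDensity_eq_lintegral_mul _ (measurable_gaussianPDF _ _) hFm]
        rfl

lemma lintegral_add_mul_eq_tsum_gaussianPDF [IsFiniteMeasure μ] {W : Ω → ℝ} {P : Ω → ℕ}
    (hWm : Measurable W) (hPm : Measurable P) (hWP : IndepFun W P μ) {v : ℝ≥0} (hv : v ≠ 0)
    (hW : μ.map W = gaussianReal 0 v) (c : ℕ → ℝ) {σ : ℝ} (hσ : σ ≠ 0)
    {F : ℝ → ℝ → ℝ≥0∞} (hF : Measurable (Function.uncurry F)) :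
    ∫⁻ ω, F (W ω) (c (P ω) + σ * W ω) ∂μ =
      ∫⁻ y, ∑' m, μ (P ⁻¹' {m}) * gaussianPDF (c m) ((σ ^ 2).toNNReal * v) y *
        F ((y - c m) / σ) y := by
  set G : ℝ × ℕ → ℝ≥0∞ := fun p => F p.1 (c p.2 + σ * p.1)
  have hG : Measurable G := hF.comp (measurable_fst.prodMk
    ((Measurable.of_discrete.comp measurable_snd).add (measurable_fst.const_mul σ)))
  have hFm : ∀ m, Measurable fun y => F ((y - c m) / σ) y := fun m =>
    hF.comp (((measurable_id.sub_const _).div_const _).prodMk measurable_id)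
  have hlaw : μ.map (fun ω => (W ω, P ω)) = (gaussianReal 0 v).prod (μ.map P) := by
    rw [← hW]
    exact (indepFun_iff_map_prod_eq_prod_map_map hWm.aemeasurable hPm.aemeasurable).1 hWP
  calc ∫⁻ ω, F (W ω) (c (P ω) + σ * W ω) ∂μ
      = ∫⁻ p, G p ∂μ.map (fun ω => (W ω, P ω)) := (lintegral_map hG (hWm.prodMk hPm)).symm
    _ = ∑' m, μ (P ⁻¹' {m}) *
          ∫⁻ y, gaussianPDF (c m) ((σ ^ 2).toNNReal * v) y * F ((y - c m) / σ) y := by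
        rw [hlaw, lintegral_prod_symm' _ hG, lintegral_countable']
        congr with m
        rw [Measure.map_apply hPm (measurableSet_singleton m), mul_comm,
          lintegral_comp_const_add_mul_gaussianReal hv (c m) hσ hF]
    _ = _ := by
        have hmeas : ∀ m, Measurable fun y =>
            gaussianPDF (c m) ((σ ^ 2).toNNReal * v) y * F ((y - c m) / σ) y :=
          fun m => (measurable_gaussianPDF _ _).mul (hFm m)
        simp_rw [mul_assoc]
        rw [lintegral_tsum fun m => ((hmeas m).const_mul (μ (P ⁻¹' {m}))).aemeasurable]
        congr with m
        rw [lintegral_const_mul _ (hmeas m)]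

lemma condExp_comap_ae_eq_of_forall_setLIntegral_eq [IsFiniteMeasure μ] {β : Type*}
    [MeasurableSpace β] {X : Ω → β} (hX : Measurable X) {f : Ω → ℝ} (hf : Integrable f μ)
    (hf0 : 0 ≤ f) {g : β → ℝ} (hg : Measurable g) (hg0 : 0 ≤ g)
    (h : ∀ B, MeasurableSet B →
      ∫⁻ ω in X ⁻¹' B, ENNReal.ofReal (g (X ω)) ∂μ = ∫⁻ ω in X ⁻¹' B, ENNReal.ofReal (f ω) ∂μ) :
    (fun ω => g (X ω)) =ᵐ[μ] μ[f | MeasurableSpace.comap X inferInstance] := by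
  have hgX : AEStronglyMeasurable (fun ω => g (X ω)) μ := (hg.comp hX).aestronglyMeasurable
  have hgX_int : Integrable (fun ω => g (X ω)) μ := by
    have hf_fin := (lintegral_ofReal_ne_top_iff_integrable hf.1 (ae_of_all _ hf0)).2 hf
    have huniv := h _ MeasurableSet.univ
    simp only [Set.preimage_univ, Measure.restrict_univ] at huniv
    exact (lintegral_ofReal_ne_top_iff_integrable hgX (ae_of_all _ fun ω => hg0 (X ω))).1
      (huniv ▸ hf_fin)
  refine ae_eq_condExp_of_forall_setIntegral_eq hX.comap_le hf
    (fun _ _ _ => hgX_int.integrableOn) ?_ (hg.comp (comap_measurable X)).aestronglyMeasurable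
  rintro _ ⟨B, hB, rfl⟩ _
  rw [integral_eq_lintegral_of_nonneg_ae (ae_of_all _ fun ω => hg0 (X ω)) hgX.restrict,
    integral_eq_lintegral_of_nonneg_ae (ae_of_all _ hf0) hf.1.restrict, h B hB]

end

section JumpDiffusion

variable {θ σ lam Δ x : ℝ}

noncomputable def poissonWeight (lam Δ : ℝ) (m : ℕ) : ℝ :=
  exp (-(lam * Δ)) * ((lam * Δ) ^ m / m.factorial)

def componentMean (θ lam Δ x : ℝ) (m : ℕ) : ℝ := x + (θ - lam) * Δ + m

/-- `E[W² | X = y]`: on `{X = y, P = m}` one has `W = (y - componentMean m) / σ`, and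
`P = m` has conditional probability `w_m(y) / p(y)` given `X = y`. -/
noncomputable def condSecondMoment (θ σ lam Δ x y : ℝ) : ℝ :=
  (∑' m, ((y - componentMean θ lam Δ x m) / σ) ^ 2 * wgt θ σ lam Δ x m y) /
    pdens θ σ lam Δ x y

lemma summable_poissonWeight (lam Δ : ℝ) : Summable (poissonWeight lam Δ) :=
  (Real.summable_pow_div_factorial _).mul_left _

lemma poissonWeight_nonneg (hlam : 0 ≤ lam) (hΔ : 0 ≤ Δ) (m : ℕ) :
    0 ≤ poissonWeight lam Δ m := by
  unfold poissonWeight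
  positivity

lemma wgt_eq_poissonWeight_mul_gaussianPDFReal (hΔ : 0 ≤ Δ) (ς : ℝ) (m : ℕ) (y : ℝ) :
    wgt θ ς lam Δ x m y = poissonWeight lam Δ m *
      gaussianPDFReal (componentMean θ lam Δ x m) ((ς ^ 2).toNNReal * Δ.toNNReal) y := by
  simp only [wgt, poissonWeight, componentMean, gaussianPDFReal, NNReal.coe_mul,
    Real.coe_toNNReal _ (sq_nonneg ς), Real.coe_toNNReal _ hΔ]
  rw [show 2 * π * (ς ^ 2 * Δ) = 2 * π * ς ^ 2 * Δ by ring,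
    show 2 * (ς ^ 2 * Δ) = 2 * ς ^ 2 * Δ by ring,
    show y - (x + (θ - lam) * Δ + m) = y - x - m - (θ - lam) * Δ by ring]
  ring

lemma pdens_eq_tsum (hΔ : 0 ≤ Δ) (ς y : ℝ) :
    pdens θ ς lam Δ x y = ∑' m, poissonWeight lam Δ m *
      gaussianPDFReal (componentMean θ lam Δ x m) ((ς ^ 2).toNNReal * Δ.toNNReal) y :=
  tsum_congr fun m => wgt_eq_poissonWeight_mul_gaussianPDFReal hΔ ς m y

lemma wgt_nonneg (hlam : 0 ≤ lam) (hΔ : 0 ≤ Δ) (ς : ℝ) (m : ℕ) (y : ℝ) :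
    0 ≤ wgt θ ς lam Δ x m y := by
  rw [wgt_eq_poissonWeight_mul_gaussianPDFReal hΔ]
  exact mul_nonneg (poissonWeight_nonneg hlam hΔ m) (gaussianPDFReal_nonneg _ _ _)

lemma summable_wgt (hΔ : 0 ≤ Δ) (ς y : ℝ) : Summable fun m => wgt θ ς lam Δ x m y := by
  simp_rw [wgt_eq_poissonWeight_mul_gaussianPDFReal hΔ]
  exact summable_mul_gaussianPDFReal _ _ (summable_poissonWeight lam Δ) y

lemma summable_sq_div_mul_wgt (hΔ : 0 ≤ Δ) (ς y : ℝ) :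
    Summable fun m => ((y - componentMean θ lam Δ x m) / ς) ^ 2 * wgt θ ς lam Δ x m y := by
  simp_rw [wgt_eq_poissonWeight_mul_gaussianPDFReal hΔ]
  exact summable_sq_div_mul_gaussianPDFReal _ _ (summable_poissonWeight lam Δ) ς y

lemma pdens_pos {ς : ℝ} (hς : ς ≠ 0) (hlam : 0 ≤ lam) (hΔ : 0 < Δ) (y : ℝ) :
    0 < pdens θ ς lam Δ x y := by
  have h0 : 0 < wgt θ ς lam Δ x 0 y := by
    simp only [wgt, pow_zero, Nat.factorial_zero, Nat.cast_one, div_one, mul_one]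
    positivity
  exact h0.trans_le ((summable_wgt hΔ.le ς y).le_tsum 0 fun m _ => wgt_nonneg hlam hΔ.le ς m y)

lemma hasDerivAt_pdens (hΔ : 0 ≤ Δ) (y : ℝ) {s : ℝ} (hs : 0 < s) :
    HasDerivAt (fun ς => pdens θ ς lam Δ x y)
      (∑' m, wgt θ s lam Δ x m y * (((y - componentMean θ lam Δ x m) / s) ^ 2 / Δ - 1) / s) s := by
  simp_rw [pdens_eq_tsum hΔ]
  convert hasDerivAt_tsum_mul_gaussianPDFReal_sq_mul _ _ (summable_poissonWeight lam Δ) y hs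
    using 1
  refine tsum_congr fun m => ?_
  rw [wgt_eq_poissonWeight_mul_gaussianPDFReal hΔ, Real.coe_toNNReal _ hΔ]
  ring

lemma deriv_pdens_div_pdens (hσ : 0 < σ) (hlam : 0 ≤ lam) (hΔ : 0 < Δ) (y : ℝ) :
    deriv (fun ς => pdens θ ς lam Δ x y) σ / pdens θ σ lam Δ x y =
      1 / (σ * Δ) * condSecondMoment θ σ lam Δ x y - 1 / σ := by
  have hp := (pdens_pos (θ := θ) (x := x) hσ.ne' hlam hΔ y).ne'
  have hsplit : ∀ m,
      wgt θ σ lam Δ x m y * (((y - componentMean θ lam Δ x m) / σ) ^ 2 / Δ - 1) / σ =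
        1 / (σ * Δ) * (((y - componentMean θ lam Δ x m) / σ) ^ 2 * wgt θ σ lam Δ x m y) -
          1 / σ * wgt θ σ lam Δ x m y := fun m => by
    field_simp
  rw [(hasDerivAt_pdens hΔ.le y hσ).deriv, tsum_congr hsplit,
    ((summable_sq_div_mul_wgt hΔ.le σ y).mul_left _).tsum_sub
      ((summable_wgt hΔ.le σ y).mul_left _),
    tsum_mul_left, tsum_mul_left, condSecondMoment, ← pdens]
  field_simp

lemma condSecondMoment_nonneg (hlam : 0 ≤ lam) (hΔ : 0 ≤ Δ) (y : ℝ) :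
    0 ≤ condSecondMoment θ σ lam Δ x y :=
  div_nonneg (tsum_nonneg fun m => mul_nonneg (sq_nonneg _) (wgt_nonneg hlam hΔ σ m y))
    (tsum_nonneg fun m => wgt_nonneg hlam hΔ σ m y)

lemma pdens_mul_condSecondMoment (hσ : σ ≠ 0) (hlam : 0 ≤ lam) (hΔ : 0 < Δ) (y : ℝ) :
    pdens θ σ lam Δ x y * condSecondMoment θ σ lam Δ x y =
      ∑' m, ((y - componentMean θ lam Δ x m) / σ) ^ 2 * wgt θ σ lam Δ x m y :=
  mul_div_cancel₀ _ (pdens_pos hσ hlam hΔ y).ne'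

lemma continuous_condSecondMoment (hσ : σ ≠ 0) (hlam : 0 ≤ lam) (hΔ : 0 < Δ) :
    Continuous (condSecondMoment θ σ lam Δ x) := by
  have hnum : Continuous fun y =>
      ∑' m, ((y - componentMean θ lam Δ x m) / σ) ^ 2 * wgt θ σ lam Δ x m y := by
    simp_rw [wgt_eq_poissonWeight_mul_gaussianPDFReal hΔ.le]
    exact continuous_tsum_sq_div_mul_gaussianPDFReal _ _ (summable_poissonWeight lam Δ) σ
  have hden : Continuous fun y => pdens θ σ lam Δ x y := by
    simp_rw [pdens_eq_tsum hΔ.le]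
    exact continuous_tsum_mul_gaussianPDFReal _ _ (summable_poissonWeight lam Δ)
  exact hnum.div hden fun y => (pdens_pos hσ hlam hΔ y).ne'

lemma tsum_ofReal_wgt_mul_condSecondMoment (hσ : σ ≠ 0) (hlam : 0 ≤ lam) (hΔ : 0 < Δ)
    (y : ℝ) :
    ∑' m, ENNReal.ofReal (wgt θ σ lam Δ x m y) *
        ENNReal.ofReal (condSecondMoment θ σ lam Δ x y) =
      ∑' m, ENNReal.ofReal (wgt θ σ lam Δ x m y) *
        ENNReal.ofReal (((y - componentMean θ lam Δ x m) / σ) ^ 2) := by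
  simp_rw [mul_comm (ENNReal.ofReal (wgt θ σ lam Δ x _ y)), ← ENNReal.ofReal_mul (sq_nonneg _),
    ← ENNReal.ofReal_mul (condSecondMoment_nonneg hlam hΔ.le y)]
  rw [← ENNReal.ofReal_tsum_of_nonneg
      (fun m => mul_nonneg (sq_nonneg _) (wgt_nonneg hlam hΔ.le σ m y))
      (summable_sq_div_mul_wgt hΔ.le σ y),
    ← ENNReal.ofReal_tsum_of_nonneg
      (fun m => mul_nonneg (condSecondMoment_nonneg hlam hΔ.le y) (wgt_nonneg hlam hΔ.le σ m y))
      ((summable_wgt hΔ.le σ y).mul_left _),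
    tsum_mul_left, ← pdens, mul_comm, pdens_mul_condSecondMoment hσ hlam hΔ y]

variable {Ω : Type*} [MeasurableSpace Ω] {μ : Measure Ω} [IsFiniteMeasure μ]
  {W : Ω → ℝ} {P : Ω → ℕ} {X : Ω → ℝ}

lemma lintegral_comp_eq_tsum_wgt (hσ : σ ≠ 0) (hlam : 0 ≤ lam) (hΔ : 0 < Δ)
    (hWm : Measurable W) (hPm : Measurable P) (hWP : IndepFun W P μ)
    (hW : μ.map W = gaussianReal 0 Δ.toNNReal)
    (hP : ∀ m, μ (P ⁻¹' {m}) = ENNReal.ofReal (poissonWeight lam Δ m))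
    (hX : ∀ ω, X ω = componentMean θ lam Δ x (P ω) + σ * W ω)
    {F : ℝ → ℝ → ℝ≥0∞} (hF : Measurable (Function.uncurry F)) :
    ∫⁻ ω, F (W ω) (X ω) ∂μ =
      ∫⁻ y, ∑' m, ENNReal.ofReal (wgt θ σ lam Δ x m y) *
        F ((y - componentMean θ lam Δ x m) / σ) y := by
  simp_rw [hX]
  rw [lintegral_add_mul_eq_tsum_gaussianPDF hWm hPm hWP (by simpa using hΔ) hW _ hσ hF]
  congr with y
  refine tsum_congr fun m => ?_
  rw [hP, gaussianPDF, ← ENNReal.ofReal_mul (poissonWeight_nonneg hlam hΔ.le m),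
    ← wgt_eq_poissonWeight_mul_gaussianPDFReal hΔ.le]

lemma setLIntegral_condSecondMoment_eq (hσ : σ ≠ 0) (hlam : 0 ≤ lam) (hΔ : 0 < Δ)
    (hWm : Measurable W) (hPm : Measurable P) (hWP : IndepFun W P μ)
    (hW : μ.map W = gaussianReal 0 Δ.toNNReal)
    (hP : ∀ m, μ (P ⁻¹' {m}) = ENNReal.ofReal (poissonWeight lam Δ m))
    (hX : ∀ ω, X ω = componentMean θ lam Δ x (P ω) + σ * W ω) {B : Set ℝ}
    (hB : MeasurableSet B) :
    ∫⁻ ω in X ⁻¹' B, ENNReal.ofReal (condSecondMoment θ σ lam Δ x (X ω)) ∂μ =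
      ∫⁻ ω in X ⁻¹' B, ENNReal.ofReal (W ω ^ 2) ∂μ := by
  have hXm : Measurable X := by
    rw [funext hX]
    exact ((Measurable.of_discrete (f := componentMean θ lam Δ x)).comp hPm).add
      (hWm.const_mul σ)
  have hrestrict (φ : Ω → ℝ≥0∞) :
      ∫⁻ ω in X ⁻¹' B, φ ω ∂μ = ∫⁻ ω, B.indicator 1 (X ω) * φ ω ∂μ := by
    rw [← lintegral_indicator (hXm hB)]
    congr with ω
    by_cases h : X ω ∈ B <;> simp [h]
  have hind : Measurable (B.indicator (1 : ℝ → ℝ≥0∞)) := measurable_one.indicator hB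
  have hg := (continuous_condSecondMoment (θ := θ) (x := x) hσ hlam hΔ).measurable
  rw [hrestrict, hrestrict,
    lintegral_comp_eq_tsum_wgt hσ hlam hΔ hWm hPm hWP hW hP hX
      (F := fun _ y => B.indicator 1 y * ENNReal.ofReal (condSecondMoment θ σ lam Δ x y))
      ((hind.mul hg.ennreal_ofReal).comp measurable_snd),
    lintegral_comp_eq_tsum_wgt hσ hlam hΔ hWm hPm hWP hW hP hX
      (F := fun w y => B.indicator 1 y * ENNReal.ofReal (w ^ 2))
      ((hind.comp measurable_snd).mul (measurable_fst.pow_const 2).ennreal_ofReal)]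
  refine lintegral_congr fun y => ?_
  simp only [mul_left_comm _ (B.indicator 1 y), ENNReal.tsum_mul_left,
    tsum_ofReal_wgt_mul_condSecondMoment hσ hlam hΔ y]

end JumpDiffusion

/-- Proposition 1, σ-derivative, corrected form. For every `y` the map
`σ ↦ p^{θ,σ,λ}(Δ,x,y)` is differentiable on `(0,∞)`, and for (law of `X`)-a.e. `y`,
`∂_σ p / p (Δ,x,y) = (1/(σΔ)) E[W² | X = y] − 1/σ`. -/
theorem score_sigma
    {Ω : Type*} [MeasurableSpace Ω] (μ : Measure Ω) [IsProbabilityMeasure μ]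
    (Δ x θ σ lam : ℝ) (hΔ : Δ ∈ Set.Ioc (0 : ℝ) 1) (hσ : 0 < σ) (hlam : 0 < lam)
    (W : Ω → ℝ) (P : Ω → ℕ) (hWm : Measurable W) (hPm : Measurable P)
    (hW : μ.map W = gaussianReal 0 Δ.toNNReal)
    (hP : ∀ m : ℕ, μ (P ⁻¹' {m}) =
      ENNReal.ofReal (Real.exp (-(lam * Δ)) * (lam * Δ) ^ m / (Nat.factorial m : ℝ)))
    (hWP : IndepFun W P μ)
    (X : Ω → ℝ) (hX : X = fun ω => x + θ * Δ + σ * W ω + (P ω : ℝ) - lam * Δ) :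
    (∀ y : ℝ, ∀ s ∈ Set.Ioi (0 : ℝ), DifferentiableAt ℝ (fun ς => pdens θ ς lam Δ x y) s) ∧
      ∃ g : ℝ → ℝ, Measurable g ∧
        (fun ω => g (X ω)) =ᵐ[μ] μ[fun ω => (W ω) ^ 2 | MeasurableSpace.comap X inferInstance] ∧
        ∀ᵐ y ∂(μ.map X),
          deriv (fun ς => pdens θ ς lam Δ x y) σ / pdens θ σ lam Δ x y =
            (1 / (σ * Δ)) * g y - 1 / σ := by
  have hΔ0 : 0 < Δ := hΔ.1
  have hX' : ∀ ω, X ω = componentMean θ lam Δ x (P ω) + σ * W ω := fun ω => by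
    rw [hX, componentMean]; ring
  have hP' : ∀ m, μ (P ⁻¹' {m}) = ENNReal.ofReal (poissonWeight lam Δ m) := fun m => by
    rw [hP, poissonWeight, mul_div_assoc]
  have hg := continuous_condSecondMoment (θ := θ) (x := x) hσ.ne' hlam.le hΔ0
  refine ⟨fun y s hs => (hasDerivAt_pdens hΔ0.le y hs).differentiableAt,
    condSecondMoment θ σ lam Δ x, hg.measurable, ?_,
    ae_of_all _ fun y => deriv_pdens_div_pdens hσ hlam.le hΔ0 y⟩
  exact condExp_comap_ae_eq_of_forall_setLIntegral_eq (by rw [hX]; fun_prop)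
    (integrable_sq_of_map_eq_gaussianReal hWm.aemeasurable hW) (fun ω => sq_nonneg _)
    hg.measurable (condSecondMoment_nonneg hlam.le hΔ0.le)
    fun B hB => setLIntegral_condSecondMoment_eq hσ.ne' hlam.le hΔ0 hWm hPm hWP hW hP' hX' hB
end

section
/- (Lemma 2 / Lemma \ref{lemma4}.) A version of the conditional distribution of the jump count P given X is given by: for every m ∈ ℕ and (law of X)-almost every y ∈ ℝ, P(P = m | X = y) = [ e^{−(y − x − m − (θ−λ)Δ)²/(2σ²Δ)} (λΔ)^m/m! ] / [ Σ_{i=0}^∞ e^{−(y − x − i − (θ−λ)Δ)²/(2σ²Δ)} (λΔ)^i/i! ]. -/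
/-!
On the event `{P = m}` the independence of `W` and `P` makes `X = σ W + (c + m)`, with
`c = x + (θ - λ) Δ`, a Gaussian of mean `c + m` and variance `σ² Δ`. Hence `(X, P)` has the
joint density `q m y = φ_{c+m, σ²Δ}(y) · P(P = m)` with respect to Lebesgue ⊗ counting measure.
For a countable parameter, Bayes' formula says that the kernel `y ↦ q m y / ∑ᵢ q i y`
disintegrates the joint law against the law of `X`, so by uniqueness of disintegrations it is
a version of the conditional distribution. The factor `(2πσ²Δ)^{-1/2} e^{-λΔ}` common to all
`q m y` cancels in the ratio, leaving the stated formula.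
-/

open MeasureTheory ProbabilityTheory Real Filter
open scoped ENNReal NNReal

lemma ENNReal.ofReal_div_tsum {ι : Type*} {g : ι → ℝ} (hg : ∀ i, 0 ≤ g i) (hs : Summable g)
    (i : ι) :
    ENNReal.ofReal (g i / ∑' j, g j) = ENNReal.ofReal (g i) / ∑' j, ENNReal.ofReal (g j) := by
  rw [← ENNReal.ofReal_tsum_of_nonneg hg hs]
  rcases (tsum_nonneg hg).eq_or_lt with hzero | hpos
  · have : g i = 0 := le_antisymm (hzero ▸ hs.le_tsum i fun j _ => hg j) (hg i)
    simp [this]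
  · exact ENNReal.ofReal_div_of_pos hpos

lemma Real.summable_exp_mul_pow_div_factorial {a : ℕ → ℝ} (ha : ∀ i, a i ≤ 0) {t : ℝ}
    (ht : 0 ≤ t) : Summable fun i => Real.exp (a i) * (t ^ i / (Nat.factorial i : ℝ)) :=
  (Real.summable_pow_div_factorial t).of_nonneg_of_le (fun i => by positivity)
    fun i => mul_le_of_le_one_left (by positivity) (Real.exp_le_one_iff.mpr (ha i))

lemma MeasureTheory.Measure.ext_prod_singleton {β ι : Type*} [MeasurableSpace β]
    [MeasurableSpace ι] [Countable ι] [MeasurableSingletonClass ι] {ρ ρ' : Measure (β × ι)}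
    [IsFiniteMeasure ρ]
    (h : ∀ (A : Set β) (i : ι), MeasurableSet A → ρ (A ×ˢ {i}) = ρ' (A ×ˢ {i})) : ρ = ρ' := by
  refine Measure.ext_prod fun {A t} hA _ => ?_
  have hfibers : A ×ˢ t = ⋃ i ∈ t, A ×ˢ {i} := by ext; simp
  have hdisj : t.PairwiseDisjoint fun i => A ×ˢ ({i} : Set ι) := fun i _ j _ hij =>
    Set.disjoint_prod.mpr (Or.inr (Set.disjoint_singleton.mpr hij))
  have hmeas : ∀ i ∈ t, MeasurableSet (A ×ˢ ({i} : Set ι)) := fun i _ =>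
    hA.prod (measurableSet_singleton i)
  rw [hfibers, measure_biUnion t.to_countable hdisj hmeas,
    measure_biUnion t.to_countable hdisj hmeas]
  exact tsum_congr fun i => h A i hA

namespace ProbabilityTheory

section Posterior

variable {Ω β ι : Type*} [MeasurableSpace Ω] [MeasurableSpace β] [MeasurableSpace ι]
  [Countable ι] [MeasurableSingletonClass ι]

/-- Bayes' formula for a countable parameter `i` whose joint density with the data `y` is
`q i y`. -/
noncomputable def posteriorOfDensities (q : ι → β → ℝ≥0∞) : Kernel β ι :=
  (Kernel.const β Measure.count).withDensity fun y i => q i y / ∑' j, q j y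

variable {q : ι → β → ℝ≥0∞}

lemma measurable_uncurry_div_tsum (hq : ∀ i, Measurable (q i)) :
    Measurable (Function.uncurry fun y i => q i y / ∑' j, q j y) :=
  measurable_from_prod_countable_left fun i => (hq i).div (Measurable.tsum hq)

lemma posteriorOfDensities_apply_singleton (hq : ∀ i, Measurable (q i)) (y : β) (i : ι) :
    posteriorOfDensities q y {i} = q i y / ∑' j, q j y := by
  rw [posteriorOfDensities, Kernel.withDensity_apply' _ (measurable_uncurry_div_tsum hq),
    Kernel.const_apply, lintegral_singleton, Measure.count_singleton, mul_one]

lemma isFiniteKernel_posteriorOfDensities (hq : ∀ i, Measurable (q i)) :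
    IsFiniteKernel (posteriorOfDensities q) := by
  refine ⟨⟨1, ENNReal.one_lt_top, fun y => ?_⟩⟩
  rw [posteriorOfDensities, Kernel.withDensity_apply' _ (measurable_uncurry_div_tsum hq),
    Kernel.const_apply, Measure.restrict_univ, lintegral_count]
  simp_rw [div_eq_mul_inv]
  rw [ENNReal.tsum_mul_right]
  exact ENNReal.div_self_le_one

variable {μ : Measure Ω} {ν : Measure β} {X : Ω → β} {Y : Ω → ι}

lemma map_eq_withDensity_tsum_of_joint_density (hX : Measurable X) (hY : Measurable Y)
    (hq : ∀ i, Measurable (q i))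
    (hjoint : ∀ i {A : Set β}, MeasurableSet A → μ (X ⁻¹' A ∩ Y ⁻¹' {i}) = ∫⁻ y in A, q i y ∂ν) :
    μ.map X = ν.withDensity fun y => ∑' i, q i y := by
  ext A hA
  have hfibers : X ⁻¹' A = ⋃ i, X ⁻¹' A ∩ Y ⁻¹' {i} := by ext; simp
  have hdisj : Pairwise fun i j => Disjoint (X ⁻¹' A ∩ Y ⁻¹' {i}) (X ⁻¹' A ∩ Y ⁻¹' {j}) :=
    fun i j hij => ((Set.disjoint_singleton.mpr hij).preimage Y).mono Set.inter_subset_right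
      Set.inter_subset_right
  rw [Measure.map_apply hX hA, withDensity_apply _ hA, lintegral_tsum fun i => (hq i).aemeasurable,
    hfibers, measure_iUnion hdisj fun i => (hX hA).inter (hY (measurableSet_singleton i))]
  exact tsum_congr fun i => hjoint i hA

theorem condDistrib_ae_eq_posteriorOfDensities [IsFiniteMeasure μ] [StandardBorelSpace ι]
    [Nonempty ι] (hX : Measurable X) (hY : Measurable Y) (hq : ∀ i, Measurable (q i))
    (hjoint : ∀ i {A : Set β}, MeasurableSet A → μ (X ⁻¹' A ∩ Y ⁻¹' {i}) = ∫⁻ y in A, q i y ∂ν) :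
    condDistrib Y X μ =ᵐ[μ.map X] posteriorOfDensities q := by
  have := isFiniteKernel_posteriorOfDensities hq
  have hmap := map_eq_withDensity_tsum_of_joint_density hX hY hq hjoint
  have hfinite : ∀ᵐ y ∂ν, ∑' j, q j y ≠ ∞ := by
    have hint : ∫⁻ y, ∑' j, q j y ∂ν ≠ ∞ := by
      rw [← setLIntegral_univ, ← withDensity_apply _ MeasurableSet.univ, ← hmap]
      exact measure_ne_top _ _
    filter_upwards [ae_lt_top (Measurable.tsum hq) hint] with y hy using hy.ne
  refine condDistrib_ae_eq_of_measure_eq_compProd_of_measurable hX hY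
    (Measure.ext_prod_singleton fun A i hA => ?_)
  rw [Measure.map_apply (hX.prodMk hY) (hA.prod (measurableSet_singleton i)), Set.mk_preimage_prod,
    hjoint i hA, Measure.compProd_apply_prod hA (measurableSet_singleton i), hmap,
    setLIntegral_withDensity_eq_setLIntegral_mul _ (Measurable.tsum hq)
      ((posteriorOfDensities q).measurable_coe (measurableSet_singleton i)) hA]
  refine setLIntegral_congr_fun_ae hA ?_
  filter_upwards [hfinite] with y hy _
  rw [Pi.mul_apply, posteriorOfDensities_apply_singleton hq]
  exact (ENNReal.mul_div_cancel' (fun h => le_antisymm (h ▸ ENNReal.le_tsum i) bot_le)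
    fun h => absurd h hy).symm

end Posterior

section Gaussian

variable {Ω ι : Type*} [MeasurableSpace Ω] [MeasurableSpace ι] [MeasurableSingletonClass ι]
  {μ : Measure Ω}

lemma gaussianReal_map_const_mul_add_const (m : ℝ) (v : ℝ≥0) (a b : ℝ) :
    (gaussianReal m v).map (fun w => a * w + b) =
      gaussianReal (a * m + b) (.mk (a ^ 2) (sq_nonneg a) * v) := by
  have hcomp : (fun w => a * w + b) = (· + b) ∘ (a * ·) := rfl
  rw [hcomp, ← Measure.map_map (measurable_add_const b) (measurable_const_mul a),
    gaussianReal_map_const_mul, gaussianReal_map_add_const]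

lemma measure_preimage_inter_fiber_eq_lintegral_gaussianPDF {W : Ω → ℝ} {P : Ω → ι}
    (hWm : Measurable W) {v : ℝ≥0} (hW : μ.map W = gaussianReal 0 v) (hWP : IndepFun W P μ)
    {a : ℝ} (hav : .mk (a ^ 2) (sq_nonneg a) * v ≠ 0) (h : ι → ℝ) (i : ι) {A : Set ℝ}
    (hA : MeasurableSet A) :
    μ ((fun ω => a * W ω + h (P ω)) ⁻¹' A ∩ P ⁻¹' {i}) =
      ∫⁻ y in A, gaussianPDF (h i) (.mk (a ^ 2) (sq_nonneg a) * v) y * μ (P ⁻¹' {i}) := by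
  have hfiber : (fun ω => a * W ω + h (P ω)) ⁻¹' A ∩ P ⁻¹' {i} =
      W ⁻¹' ((fun w => a * w + h i) ⁻¹' A) ∩ P ⁻¹' {i} := by
    ext ω
    constructor <;> rintro ⟨hω, hPω⟩ <;> simp_all
  have hmeas : MeasurableSet ((fun w => a * w + h i) ⁻¹' A) :=
    ((measurable_const_mul a).add_const _) hA
  rw [hfiber, hWP.measure_inter_preimage_eq_mul _ _ hmeas (measurableSet_singleton i),
    ← Measure.map_apply hWm hmeas, hW, ← Measure.map_apply (by fun_prop) hA,
    gaussianReal_map_const_mul_add_const, mul_zero, zero_add, gaussianReal_apply _ hav,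
    lintegral_mul_const _ (measurable_gaussianPDF _ _)]

end Gaussian

end ProbabilityTheory

/-- Lemma 2. A version of the conditional distribution of the jump count `P`
given `X`: for every `m` and (law of `X`)-a.e. `y`,
`P(P = m | X = y)` equals the explicit Gaussian–Poisson ratio. -/
theorem cond_law_jump_count
    {Ω : Type*} [MeasurableSpace Ω] (μ : Measure Ω) [IsProbabilityMeasure μ]
    (Δ x θ σ lam : ℝ) (hΔ : Δ ∈ Set.Ioc (0 : ℝ) 1) (hσ : 0 < σ) (hlam : 0 < lam)
    (W : Ω → ℝ) (P : Ω → ℕ) (hWm : Measurable W) (hPm : Measurable P)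
    (hW : μ.map W = gaussianReal 0 Δ.toNNReal)
    (hP : ∀ m : ℕ, μ (P ⁻¹' {m}) =
      ENNReal.ofReal (Real.exp (-(lam * Δ)) * (lam * Δ) ^ m / (Nat.factorial m : ℝ)))
    (hWP : IndepFun W P μ)
    (X : Ω → ℝ) (hX : X = fun ω => x + θ * Δ + σ * W ω + (P ω : ℝ) - lam * Δ) :
    ∀ m : ℕ, ∀ᵐ y ∂(μ.map X),
      condDistrib P X μ y {m} =
        ENNReal.ofReal
          ((Real.exp (-(y - x - (m : ℝ) - (θ - lam) * Δ) ^ 2 / (2 * σ ^ 2 * Δ)) *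
              ((lam * Δ) ^ m / (Nat.factorial m : ℝ))) /
            ∑' i : ℕ,
              Real.exp (-(y - x - (i : ℝ) - (θ - lam) * Δ) ^ 2 / (2 * σ ^ 2 * Δ)) *
                ((lam * Δ) ^ i / (Nat.factorial i : ℝ))) := by
  have hΔ0 : 0 < Δ := hΔ.1
  set c := x + (θ - lam) * Δ
  set τ : ℝ≥0 := .mk (σ ^ 2) (sq_nonneg σ) * Δ.toNNReal
  have hτ : (τ : ℝ) = σ ^ 2 * Δ := by simp [τ, hΔ0.le]
  have hτ0 : τ ≠ 0 := by rw [← NNReal.coe_ne_zero, hτ]; positivity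
  obtain rfl : X = fun ω => σ * W ω + (c + P ω) := by rw [hX]; ext; ring
  set q : ℕ → ℝ → ℝ≥0∞ := fun i y => gaussianPDF (c + i) τ y * μ (P ⁻¹' {i})
  have hq : ∀ i, Measurable (q i) := fun i => (measurable_gaussianPDF _ _).mul_const _
  have hjoint i {A : Set ℝ} (hA : MeasurableSet A) :=
    measure_preimage_inter_fiber_eq_lintegral_gaussianPDF hWm hW hWP hτ0 (fun i : ℕ => c + i) i hA
  intro m
  filter_upwards [condDistrib_ae_eq_posteriorOfDensities (by fun_prop) hPm hq hjoint] with y hy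
  set g : ℕ → ℝ := fun i => Real.exp (-(y - x - (i : ℝ) - (θ - lam) * Δ) ^ 2 / (2 * σ ^ 2 * Δ)) *
    ((lam * Δ) ^ i / (Nat.factorial i : ℝ))
  set K : ℝ := (√(2 * π * τ))⁻¹ * Real.exp (-(lam * Δ))
  have hg : ∀ i, 0 ≤ g i := fun i => by positivity
  have hgs : Summable g := Real.summable_exp_mul_pow_div_factorial
    (fun i => div_nonpos_of_nonpos_of_nonneg (neg_nonpos.mpr (sq_nonneg _)) (by positivity))
    (by positivity)
  have hqg : ∀ i, q i y = ENNReal.ofReal K * ENNReal.ofReal (g i) := fun i => by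
    rw [← ENNReal.ofReal_mul (by positivity)]
    simp only [q, hP, gaussianPDF]
    rw [← ENNReal.ofReal_mul (gaussianPDFReal_nonneg _ _ _)]
    congr 1
    simp only [gaussianPDFReal, g, K, hτ, c]
    ring_nf
  have hK : ENNReal.ofReal K ≠ 0 := (ENNReal.ofReal_pos.mpr (by positivity)).ne'
  rw [hy, posteriorOfDensities_apply_singleton hq, ENNReal.ofReal_div_tsum hg hgs]
  simp_rw [hqg]
  rw [ENNReal.tsum_mul_left, ENNReal.mul_div_mul_left _ _ hK ENNReal.ofReal_ne_top]
end

section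
/- (Lemma 4, first bound / bound on S_{1,1,j}^p.) Let σ, σ̄, λ̄ > 0, Δ ∈ (0,1], δ ∈ ℝ, α ∈ (0,1/2), j, p ∈ ℕ, and b ∈ ℝ with |b| ≤ Δ^α. Assume σΔ^α + |δ|Δ ≤ 1/4. Then [ Σ_{m<j} m^p e^{−(σb + j − m + δΔ)²/(2σ̄²Δ)} (λ̄Δ)^m/m! ] / [ Σ_{i=0}^∞ e^{−(σb + j − i + δΔ)²/(2σ̄²Δ)} (λ̄Δ)^i/i! ] ≤ (j!/(λ̄Δ)^j) Σ_{m<j} m^p e^{−(j−m)²/(4σ̄²Δ)} (λ̄Δ)^m/m!. -/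
open MeasureTheory Real Filter Nat

/-!
Write `x = σ b + δ Δ`, so that `|x| ≤ 1/4`. The denominator is at least its `i = j` term
`e^{-x²/(2σ̄²Δ)} (λ̄Δ)^j / j!`. In the numerator `k = j - m ≥ 1`, and then
`(x + k)² ≥ x² + k²/2`, so each Gaussian factor splits as
`e^{-(x+k)²/(2σ̄²Δ)} ≤ e^{-x²/(2σ̄²Δ)} e^{-k²/(4σ̄²Δ)}`; the common factor `e^{-x²/(2σ̄²Δ)}` cancels.
-/

theorem summable_mul_pow_div_factorial {w : ℕ → ℝ} {C : ℝ} (hw : ∀ i, |w i| ≤ C) (y : ℝ) :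
    Summable fun i => w i * (y ^ i / i !) := by
  refine Summable.of_norm_bounded ((Real.summable_pow_div_factorial |y|).mul_left C) fun i => ?_
  rw [Real.norm_eq_abs, abs_mul, abs_div, abs_pow, Nat.abs_cast]
  exact mul_le_mul_of_nonneg_right (hw i) (by positivity)

/-- The excess is `2 x k + k²/2 ≥ k (k - 1) / 2 ≥ 0`. -/
theorem sq_add_half_sq_le_sq_add {x k : ℝ} (hx : -(1 / 4) ≤ x) (hk : 1 ≤ k) :
    x ^ 2 + k ^ 2 / 2 ≤ (x + k) ^ 2 := by
  nlinarith

theorem exp_neg_sq_add_div_le {s x k : ℝ} (hs : 0 < s) (hx : -(1 / 4) ≤ x) (hk : 1 ≤ k) :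
    exp (-(x + k) ^ 2 / s) ≤ exp (-x ^ 2 / s) * exp (-k ^ 2 / (2 * s)) := by
  rw [← exp_add, exp_le_exp, ← sub_nonneg]
  have h := sq_add_half_sq_le_sq_add hx hk
  have : -x ^ 2 / s + -k ^ 2 / (2 * s) - -(x + k) ^ 2 / s
      = ((x + k) ^ 2 - (x ^ 2 + k ^ 2 / 2)) / s := by
    field_simp; ring
  rw [this]
  exact div_nonneg (sub_nonneg.2 h) hs.le

section GaussianPoisson

variable {s y : ℝ} (x : ℝ) (j : ℕ)

theorem exp_mul_pow_div_factorial_le_tsum (hs : 0 < s) (hy : 0 ≤ y) :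
    exp (-x ^ 2 / s) * (y ^ j / j !) ≤
      ∑' i : ℕ, exp (-(x + ((j : ℝ) - i)) ^ 2 / s) * (y ^ i / i !) := by
  have hbound : ∀ i : ℕ, |exp (-(x + ((j : ℝ) - i)) ^ 2 / s)| ≤ 1 := fun i => by
    rw [abs_of_pos (exp_pos _), exp_le_one_iff]
    exact div_nonpos_of_nonpos_of_nonneg (neg_nonpos.2 (sq_nonneg _)) hs.le
  have hj := (summable_mul_pow_div_factorial hbound y).le_tsum j fun i _ => by positivity
  simpa only [sub_self, add_zero] using hj

theorem sum_range_pow_mul_exp_le (p : ℕ) (hs : 0 < s) (hx : -(1 / 4) ≤ x) (hy : 0 ≤ y) :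
    ∑ m ∈ Finset.range j, (m : ℝ) ^ p * exp (-(x + ((j : ℝ) - m)) ^ 2 / s) * (y ^ m / m !) ≤
      exp (-x ^ 2 / s) *
        ∑ m ∈ Finset.range j, (m : ℝ) ^ p * exp (-((j : ℝ) - m) ^ 2 / (2 * s)) * (y ^ m / m !) := by
  rw [Finset.mul_sum]
  refine Finset.sum_le_sum fun m hm => ?_
  have hk : 1 ≤ (j : ℝ) - m := by
    have : (m : ℝ) + 1 ≤ j := by exact_mod_cast Finset.mem_range.1 hm
    linarith
  calc (m : ℝ) ^ p * exp (-(x + ((j : ℝ) - m)) ^ 2 / s) * (y ^ m / m !)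
      ≤ (m : ℝ) ^ p * (exp (-x ^ 2 / s) * exp (-((j : ℝ) - m) ^ 2 / (2 * s))) * (y ^ m / m !) := by
        gcongr
        exact exp_neg_sq_add_div_le hs hx hk
    _ = _ := by ring

end GaussianPoisson

theorem bound_S11_general
    (σ σb lamb Δ δ α : ℝ) (hσ : 0 < σ) (hσb : 0 < σb) (hlamb : 0 < lamb)
    (hΔ : Δ ∈ Set.Ioc (0 : ℝ) 1)
    (j p : ℕ) (b : ℝ) (hb : |b| ≤ Δ ^ α) (hsmall : σ * Δ ^ α + |δ| * Δ ≤ 1 / 4) :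
    (∑ m ∈ Finset.range j, (m : ℝ) ^ p *
        Real.exp (-(σ * b + (j : ℝ) - (m : ℝ) + δ * Δ) ^ 2 / (2 * σb ^ 2 * Δ)) *
        ((lamb * Δ) ^ m / (Nat.factorial m : ℝ))) /
      (∑' i : ℕ,
        Real.exp (-(σ * b + (j : ℝ) - (i : ℝ) + δ * Δ) ^ 2 / (2 * σb ^ 2 * Δ)) *
        ((lamb * Δ) ^ i / (Nat.factorial i : ℝ))) ≤
      ((Nat.factorial j : ℝ) / (lamb * Δ) ^ j) *
        ∑ m ∈ Finset.range j, (m : ℝ) ^ p *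
          Real.exp (-((j : ℝ) - (m : ℝ)) ^ 2 / (4 * σb ^ 2 * Δ)) *
          ((lamb * Δ) ^ m / (Nat.factorial m : ℝ)) := by
  have hΔ0 := hΔ.1
  set x := σ * b + δ * Δ
  have hx : -(1 / 4) ≤ x := by
    have : |x| ≤ 1 / 4 := calc
      |x| ≤ σ * |b| + |δ| * Δ := by
        simpa only [abs_mul, abs_of_pos hσ, abs_of_pos hΔ0] using abs_add_le (σ * b) (δ * Δ)
      _ ≤ 1 / 4 := by nlinarith
    exact neg_le_of_abs_le this
  have hs : 0 < 2 * σb ^ 2 * Δ := by positivity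
  have hy : 0 ≤ lamb * Δ := by positivity
  have harg : ∀ i : ℕ, σ * b + (j : ℝ) - i + δ * Δ = x + ((j : ℝ) - i) := fun i => by ring
  rw [show 4 * σb ^ 2 * Δ = 2 * (2 * σb ^ 2 * Δ) by ring]
  simp only [harg]
  calc _ ≤ (exp (-x ^ 2 / (2 * σb ^ 2 * Δ)) * _) /
        (exp (-x ^ 2 / (2 * σb ^ 2 * Δ)) * ((lamb * Δ) ^ j / j !)) :=
        div_le_div₀ (by positivity) (sum_range_pow_mul_exp_le x j p hs hx hy) (by positivity)
          (exp_mul_pow_div_factorial_le_tsum x j hs hy)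
    _ = _ := by field_simp

/-- Lemma 4, bound on `S_{1,1,j}^p`. -/
theorem bound_S11
    (σ σb lamb Δ δ α : ℝ) (hσ : 0 < σ) (hσb : 0 < σb) (hlamb : 0 < lamb)
    (hΔ : Δ ∈ Set.Ioc (0 : ℝ) 1) (hα : α ∈ Set.Ioo (0 : ℝ) (1 / 2))
    (j p : ℕ) (b : ℝ) (hb : |b| ≤ Δ ^ α) (hsmall : σ * Δ ^ α + |δ| * Δ ≤ 1 / 4) :
    (∑ m ∈ Finset.range j, (m : ℝ) ^ p *
        Real.exp (-(σ * b + (j : ℝ) - (m : ℝ) + δ * Δ) ^ 2 / (2 * σb ^ 2 * Δ)) *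
        ((lamb * Δ) ^ m / (Nat.factorial m : ℝ))) /
      (∑' i : ℕ,
        Real.exp (-(σ * b + (j : ℝ) - (i : ℝ) + δ * Δ) ^ 2 / (2 * σb ^ 2 * Δ)) *
        ((lamb * Δ) ^ i / (Nat.factorial i : ℝ))) ≤
      ((Nat.factorial j : ℝ) / (lamb * Δ) ^ j) *
        ∑ m ∈ Finset.range j, (m : ℝ) ^ p *
          Real.exp (-((j : ℝ) - (m : ℝ)) ^ 2 / (4 * σb ^ 2 * Δ)) *
          ((lamb * Δ) ^ m / (Nat.factorial m : ℝ)) :=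
  bound_S11_general σ σb lamb Δ δ α hσ hσb hlamb hΔ j p b hb hsmall
end

section
/- (Lemma 4, second bound / bound on S_{1,2,j}^p.) Let σ, σ̄, λ̄ > 0, Δ ∈ (0,1], δ ∈ ℝ, α ∈ (0,1/2), j, p ∈ ℕ, and b ∈ ℝ with |b| ≤ Δ^α. Assume σΔ^α + |δ|Δ ≤ 1/4. Then [ Σ_{m>j} m^p e^{−(σb + j − m + δΔ)²/(2σ̄²Δ)} (λ̄Δ)^m/m! ] / [ Σ_{i=0}^∞ e^{−(σb + j − i + δΔ)²/(2σ̄²Δ)} (λ̄Δ)^i/i! ] ≤ e^{−1/(4σ̄²Δ)} Σ_{ℓ≥1} (ℓ+j)^p (λ̄Δ)^ℓ/ℓ!. -/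
open MeasureTheory Real Filter

/-!
Write `c = σ b + δ Δ`, so that `|c| ≤ 1/4`, and `s = 2 σ̄² Δ`. The denominator is at least its
`i = j` term `exp (-c² / s) (λ̄Δ)^j / j!`. For `m = j + l` with `l ≥ 1`, the Gaussian factor of the
numerator is `exp (-(c - l)² / s)`, and `(c - l)² ≥ c² + 1/2` gains the factor `exp (-1 / (2 s))`,
while `(j + l)! ≥ j! l!` splits off the denominator's Poisson weight. Comparing term by term gives
the bound.
-/

theorem tsum_ite_le_eq_tsum_add {M : Type*} [AddCommMonoid M] [TopologicalSpace M]
    (f : ℕ → M) (n : ℕ) : ∑' m, (if n ≤ m then f m else 0) = ∑' k, f (k + n) := by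
  have hinj : Function.Injective (· + n) := add_left_injective n
  rw [← hinj.tsum_eq]
  · exact tsum_congr fun k ↦ if_pos (Nat.le_add_left n k)
  · intro m hm
    have hnm : n ≤ m := by by_contra h; exact hm (if_neg h)
    exact ⟨m - n, Nat.sub_add_cancel hnm⟩

theorem summable_add_pow_mul_pow_div_factorial (a x : ℝ) (p : ℕ) :
    Summable fun n : ℕ ↦ ((n : ℝ) + a) ^ p * (x ^ n / n.factorial) := by
  refine .of_norm_bounded
    ((Real.summable_pow_div_factorial (2 ^ p * |x|)).mul_left ((|a| + 1) ^ p)) fun n ↦ ?_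
  have hbase : |(n : ℝ) + a| ≤ (|a| + 1) * 2 ^ n := by
    have h2n : (n : ℝ) + 1 ≤ 2 ^ n := by exact_mod_cast Nat.lt_two_pow_self
    calc |(n : ℝ) + a| ≤ n + |a| := by simpa using abs_add_le (n : ℝ) a
      _ ≤ (|a| + 1) * (n + 1) := by nlinarith [abs_nonneg a, (n.cast_nonneg : (0 : ℝ) ≤ n)]
      _ ≤ (|a| + 1) * 2 ^ n := by gcongr
  calc ‖((n : ℝ) + a) ^ p * (x ^ n / n.factorial)‖
      = |(n : ℝ) + a| ^ p * (|x| ^ n / n.factorial) := by simp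
    _ ≤ ((|a| + 1) * 2 ^ n) ^ p * (|x| ^ n / n.factorial) := by gcongr
    _ = (|a| + 1) ^ p * ((2 ^ p * |x|) ^ n / n.factorial) := by
        rw [mul_pow, mul_pow, ← pow_mul, ← pow_mul, Nat.mul_comm]; ring

theorem pow_div_factorial_add_le {x : ℝ} (hx : 0 ≤ x) (j k : ℕ) :
    x ^ (j + k) / (j + k).factorial ≤ x ^ j / j.factorial * (x ^ k / k.factorial) := by
  have hfac : (j.factorial : ℝ) * k.factorial ≤ (j + k).factorial := by
    exact_mod_cast Nat.le_of_dvd (Nat.factorial_pos _)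
      (Nat.factorial_mul_factorial_dvd_factorial_add j k)
  rw [div_mul_div_comm, ← pow_add]
  gcongr

theorem sq_add_half_le_sub_sq {c k : ℝ} (hc : |c| ≤ 1 / 4) (hk : 1 ≤ k) :
    c ^ 2 + 1 / 2 ≤ (c - k) ^ 2 := by
  nlinarith [abs_le.mp hc]

theorem exp_neg_sub_sq_div_le {c k s : ℝ} (hc : |c| ≤ 1 / 4) (hk : 1 ≤ k) (hs : 0 ≤ s) :
    exp (-(c - k) ^ 2 / s) ≤ exp (-c ^ 2 / s) * exp (-1 / (2 * s)) := by
  have hsplit : -c ^ 2 / s + -1 / (2 * s) = (-c ^ 2 - 1 / 2) / s := by ring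
  rw [← exp_add, exp_le_exp, hsplit]
  exact div_le_div_of_nonneg_right (by linarith [sq_add_half_le_sub_sq hc hk]) hs

theorem gaussian_poisson_term_le {c s x : ℝ} (hc : |c| ≤ 1 / 4) (hs : 0 ≤ s) (hx : 0 ≤ x)
    (j p : ℕ) {l : ℕ} (hl : 1 ≤ l) :
    ((j : ℝ) + l) ^ p * exp (-(c - l) ^ 2 / s) * (x ^ (j + l) / (j + l).factorial) ≤
      exp (-c ^ 2 / s) * (x ^ j / j.factorial) *
        (exp (-1 / (2 * s)) * (((l : ℝ) + j) ^ p * (x ^ l / l.factorial))) := by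
  have hexp := exp_neg_sub_sq_div_le hc (k := l) (by exact_mod_cast hl) hs
  calc ((j : ℝ) + l) ^ p * exp (-(c - l) ^ 2 / s) * (x ^ (j + l) / (j + l).factorial)
      ≤ ((j : ℝ) + l) ^ p * (exp (-c ^ 2 / s) * exp (-1 / (2 * s))) *
          (x ^ j / j.factorial * (x ^ l / l.factorial)) := by
        gcongr
        exact pow_div_factorial_add_le hx j l
    _ = _ := by ring

theorem tsum_tail_div_tsum_gaussian_poisson_le {c s x : ℝ} (hc : |c| ≤ 1 / 4) (hs : 0 ≤ s)
    (hx : 0 ≤ x) (j p : ℕ) :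
    (∑' m : ℕ, if j < m then
        (m : ℝ) ^ p * exp (-(c + j - m) ^ 2 / s) * (x ^ m / m.factorial) else 0) /
      (∑' i : ℕ, exp (-(c + j - i) ^ 2 / s) * (x ^ i / i.factorial)) ≤
      exp (-1 / (2 * s)) * ∑' l : ℕ, if 1 ≤ l then ((l : ℝ) + j) ^ p * (x ^ l / l.factorial)
        else 0 := by
  set e := exp (-1 / (2 * s))
  set w : ℕ → ℝ := fun i ↦ exp (-(c + j - i) ^ 2 / s) * (x ^ i / i.factorial)
  set f : ℕ → ℝ := fun m ↦ (m : ℝ) ^ p * exp (-(c + j - m) ^ 2 / s) * (x ^ m / m.factorial)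
  set g : ℕ → ℝ := fun l ↦ ((l : ℝ) + j) ^ p * (x ^ l / l.factorial)
  have hw_nonneg : ∀ i, 0 ≤ w i := fun i ↦ by positivity
  have hw_summable : Summable w := by
    refine .of_nonneg_of_le hw_nonneg (fun i ↦ ?_) (Real.summable_pow_div_factorial x)
    refine mul_le_of_le_one_left (by positivity) (exp_le_one_iff.mpr ?_)
    exact div_nonpos_of_nonpos_of_nonneg (neg_nonpos.mpr (sq_nonneg _)) hs
  have hg_summable : Summable fun k ↦ g (k + 1) :=
    (summable_nat_add_iff 1).mpr (summable_add_pow_mul_pow_div_factorial j x p)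
  have hterm : ∀ k : ℕ, f (k + (j + 1)) ≤ w j * (e * g (k + 1)) := by
    intro k
    have hm : k + (j + 1) = j + (k + 1) := by ring
    have hshift : c + j - (j + ((k + 1 : ℕ) : ℝ)) = c - ((k + 1 : ℕ) : ℝ) := by ring
    simpa only [f, g, w, e, hm, Nat.cast_add (R := ℝ) j, hshift, add_sub_cancel_right]
      using gaussian_poisson_term_le hc hs hx j p (l := k + 1) le_add_self
  have hnum : (∑' m : ℕ, if j < m then f m else 0) = ∑' k, f (k + (j + 1)) := by
    simp only [Nat.lt_iff_add_one_le]
    exact tsum_ite_le_eq_tsum_add f (j + 1)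
  have hnum_le : ∑' k, f (k + (j + 1)) ≤ w j * (e * ∑' k, g (k + 1)) := by
    have hf_nonneg : ∀ k, 0 ≤ f (k + (j + 1)) := fun k ↦ by positivity
    have hbound_summable := (hg_summable.mul_left e).mul_left (w j)
    rw [← tsum_mul_left, ← tsum_mul_left]
    exact (Summable.of_nonneg_of_le hf_nonneg hterm hbound_summable).tsum_le_tsum hterm
      hbound_summable
  have hrhs_nonneg : 0 ≤ e * ∑' k, g (k + 1) :=
    mul_nonneg (exp_pos _).le (tsum_nonneg fun k ↦ by positivity)
  change (∑' m : ℕ, if j < m then f m else 0) / ∑' i, w i ≤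
    e * ∑' l, if 1 ≤ l then g l else 0
  rw [hnum, tsum_ite_le_eq_tsum_add g 1]
  refine div_le_of_le_mul₀ (tsum_nonneg hw_nonneg) hrhs_nonneg ?_
  calc ∑' k, f (k + (j + 1)) ≤ w j * (e * ∑' k, g (k + 1)) := hnum_le
    _ ≤ (∑' i, w i) * (e * ∑' k, g (k + 1)) :=
      mul_le_mul_of_nonneg_right (hw_summable.le_tsum j fun i _ ↦ hw_nonneg i) hrhs_nonneg
    _ = _ := mul_comm _ _

theorem bound_S12_general
    (σ σb lamb Δ δ α : ℝ) (hσ : 0 < σ) (hlamb : 0 < lamb)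
    (hΔ : Δ ∈ Set.Ioc (0 : ℝ) 1)
    (j p : ℕ) (b : ℝ) (hb : |b| ≤ Δ ^ α) (hsmall : σ * Δ ^ α + |δ| * Δ ≤ 1 / 4) :
    (∑' m : ℕ, if j < m then
        (m : ℝ) ^ p *
          Real.exp (-(σ * b + (j : ℝ) - (m : ℝ) + δ * Δ) ^ 2 / (2 * σb ^ 2 * Δ)) *
          ((lamb * Δ) ^ m / (Nat.factorial m : ℝ))
      else 0) /
      (∑' i : ℕ,
        Real.exp (-(σ * b + (j : ℝ) - (i : ℝ) + δ * Δ) ^ 2 / (2 * σb ^ 2 * Δ)) *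
        ((lamb * Δ) ^ i / (Nat.factorial i : ℝ))) ≤
      Real.exp (-1 / (4 * σb ^ 2 * Δ)) *
        ∑' l : ℕ, if 1 ≤ l then
            ((l : ℝ) + (j : ℝ)) ^ p * ((lamb * Δ) ^ l / (Nat.factorial l : ℝ))
          else 0 := by
  obtain ⟨hΔ, -⟩ := hΔ
  have hc : |σ * b + δ * Δ| ≤ 1 / 4 := calc
    |σ * b + δ * Δ| ≤ σ * |b| + |δ| * Δ := by
      simpa [abs_mul, abs_of_pos hσ, abs_of_pos hΔ] using abs_add_le (σ * b) (δ * Δ)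
    _ ≤ σ * Δ ^ α + |δ| * Δ := by gcongr
    _ ≤ 1 / 4 := hsmall
  have hshift : ∀ t : ℝ, σ * b + j - t + δ * Δ = σ * b + δ * Δ + j - t := fun t ↦ by ring
  have hscale : 4 * σb ^ 2 * Δ = 2 * (2 * σb ^ 2 * Δ) := by ring
  simp only [hshift, hscale]
  exact tsum_tail_div_tsum_gaussian_poisson_le hc (by positivity) (by positivity) j p

/-- Lemma 4, bound on `S_{1,2,j}^p`. -/
theorem bound_S12
    (σ σb lamb Δ δ α : ℝ) (hσ : 0 < σ) (hσb : 0 < σb) (hlamb : 0 < lamb)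
    (hΔ : Δ ∈ Set.Ioc (0 : ℝ) 1) (hα : α ∈ Set.Ioo (0 : ℝ) (1 / 2))
    (j p : ℕ) (b : ℝ) (hb : |b| ≤ Δ ^ α) (hsmall : σ * Δ ^ α + |δ| * Δ ≤ 1 / 4) :
    (∑' m : ℕ, if j < m then
        (m : ℝ) ^ p *
          Real.exp (-(σ * b + (j : ℝ) - (m : ℝ) + δ * Δ) ^ 2 / (2 * σb ^ 2 * Δ)) *
          ((lamb * Δ) ^ m / (Nat.factorial m : ℝ))
      else 0) /
      (∑' i : ℕ,
        Real.exp (-(σ * b + (j : ℝ) - (i : ℝ) + δ * Δ) ^ 2 / (2 * σb ^ 2 * Δ)) *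
        ((lamb * Δ) ^ i / (Nat.factorial i : ℝ))) ≤
      Real.exp (-1 / (4 * σb ^ 2 * Δ)) *
        ∑' l : ℕ, if 1 ≤ l then
            ((l : ℝ) + (j : ℝ)) ^ p * ((lamb * Δ) ^ l / (Nat.factorial l : ℝ))
          else 0 :=
  bound_S12_general σ σb lamb Δ δ α hσ hlamb hΔ j p b hb hsmall
end
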